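/- arXiv:1606.03944 — 3 statements merged into one kernel-verified Lean document; each statement's English description precedes it below -/
import Mathlib

section
/- Let m > 0, c > 0, and let f : ℝ³ \ {0} → ℝ be given by f(x) = 1 + m/(2|x|). Let F_c(u,v) = (c·cosh(v)·cos(u), c·cosh(v)·sin(u), c·v) and n_c(u,v) = cosh(v)^{-1}·(cos(u), sin(u), −sinh(v)). Then for all (u,v) ∈ ℝ², n_c(u,v) · ∇f(F_c(u,v)) = −(m/(2c²)) · (1 − v·tanh(v)) / (cosh²(v) + v²)^{3/2}. -/
/-! The factor f = φ ∘ ‖·‖, φ(r) = 1 + m/(2r), is radial, so ∇f(x) = φ'(‖x‖) x/‖x‖ = -(m/2) x/‖x‖³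
and n·∇f(F) = -(m/2) ⟨n, F⟩/‖F‖³. On the catenoid, cos² u + sin² u = 1 gives
‖F‖² = c²(cosh² v + v²) and ⟨n, F⟩ = c(1 - v tanh v). -/

open RealInnerProductSpace

/-- A point of Euclidean ℝ³. -/
noncomputable def vec3 (a b c : ℝ) : EuclideanSpace ℝ (Fin 3) :=
  (WithLp.equiv 2 (Fin 3 → ℝ)).symm ![a, b, c]

section Gradient

variable {E : Type*} [NormedAddCommGroup E] [InnerProductSpace ℝ E] [CompleteSpace E]

theorem HasDerivAt.comp_hasGradientAt {f : E → ℝ} {f' x : E} {g : ℝ → ℝ} {g' : ℝ}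
    (hg : HasDerivAt g g' (f x)) (hf : HasGradientAt f f' x) :
    HasGradientAt (g ∘ f) (g' • f') x := by
  rw [hasGradientAt_iff_hasFDerivAt] at hf ⊢
  refine (hg.comp_hasFDerivAt x hf).congr_fderiv ?_
  ext y
  simp

theorem hasGradientAt_norm {x : E} (hx : x ≠ 0) : HasGradientAt (‖·‖) (‖x‖⁻¹ • x) x := by
  have hsqrt : HasDerivAt Real.sqrt (1 / (2 * ‖x‖)) (‖x‖ ^ 2) := by
    simpa [Real.sqrt_sq (norm_nonneg x)] using Real.hasDerivAt_sqrt (by positivity : ‖x‖ ^ 2 ≠ 0)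
  have hsq : HasGradientAt (fun y : E => ‖y‖ ^ 2) ((2 : ℝ) • x) x := by
    rw [hasGradientAt_iff_hasFDerivAt]
    refine (hasStrictFDerivAt_norm_sq x).hasFDerivAt.congr_fderiv ?_
    ext y
    simp
  convert hsqrt.comp_hasGradientAt (f := fun y : E => ‖y‖ ^ 2) hsq using 1
  · ext y; simp [Real.sqrt_sq (norm_nonneg y)]
  · rw [smul_smul]; congr 1; field_simp

theorem hasGradientAt_comp_norm {g : ℝ → ℝ} {g' : ℝ} {x : E} (hx : x ≠ 0)
    (hg : HasDerivAt g g' ‖x‖) : HasGradientAt (fun y : E => g ‖y‖) ((g' / ‖x‖) • x) x := by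
  simpa [Function.comp_def, smul_smul, div_eq_mul_inv] using
    hg.comp_hasGradientAt (f := (‖·‖)) (hasGradientAt_norm hx)

noncomputable def schwarzschildFactor (m : ℝ) (x : E) : ℝ :=
  1 + m / (2 * ‖x‖)

theorem hasGradientAt_schwarzschildFactor (m : ℝ) {x : E} (hx : x ≠ 0) :
    HasGradientAt (schwarzschildFactor m) ((-(m / 2) / ‖x‖ ^ 3) • x) x := by
  have hr : ‖x‖ ≠ 0 := norm_ne_zero_iff.mpr hx
  have hg : HasDerivAt (fun r : ℝ => 1 + m / (2 * r)) (-(m / 2) / ‖x‖ ^ 2) ‖x‖ := by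
    have hfun : (fun r : ℝ => 1 + m / (2 * r)) = fun r => 1 + m / 2 * r⁻¹ := by
      funext r
      ring
    rw [hfun]
    exact (((hasDerivAt_inv hr).const_mul (m / 2)).const_add 1).congr_deriv (by ring)
  have h := hasGradientAt_comp_norm hx hg
  rw [div_div, ← pow_succ] at h
  exact h

end Gradient

theorem inner_vec3 (a b c a' b' c' : ℝ) :
    ⟪vec3 a b c, vec3 a' b' c'⟫ = a * a' + b * b' + c * c' := by
  simp [vec3, PiLp.inner_apply, Fin.sum_univ_three, mul_comm]

theorem norm_vec3 (a b c : ℝ) : ‖vec3 a b c‖ = √(a ^ 2 + b ^ 2 + c ^ 2) := by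
  simp [vec3, EuclideanSpace.norm_eq, Fin.sum_univ_three]

theorem Real.rpow_three_halves {x : ℝ} (hx : 0 ≤ x) : x ^ (3 / 2 : ℝ) = x * √x := by
  rw [Real.sqrt_eq_rpow, ← Real.rpow_one_add' hx (by norm_num)]
  norm_num

section Catenoid

open Real

noncomputable def catenoid (c u v : ℝ) : EuclideanSpace ℝ (Fin 3) :=
  vec3 (c * cosh v * cos u) (c * cosh v * sin u) (c * v)

noncomputable def catenoidNormal (u v : ℝ) : EuclideanSpace ℝ (Fin 3) :=
  vec3 ((cosh v)⁻¹ * cos u) ((cosh v)⁻¹ * sin u) ((cosh v)⁻¹ * (-sinh v))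

theorem norm_catenoid {c : ℝ} (hc : 0 ≤ c) (u v : ℝ) :
    ‖catenoid c u v‖ = c * √(cosh v ^ 2 + v ^ 2) := by
  have hsum : (c * cosh v * cos u) ^ 2 + (c * cosh v * sin u) ^ 2 + (c * v) ^ 2
      = c ^ 2 * (cosh v ^ 2 + v ^ 2) := by
    linear_combination (c * cosh v) ^ 2 * cos_sq_add_sin_sq u
  rw [catenoid, norm_vec3, hsum, sqrt_mul (sq_nonneg c), sqrt_sq hc]

theorem catenoid_ne_zero {c : ℝ} (hc : 0 < c) (u v : ℝ) : catenoid c u v ≠ 0 := by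
  rw [← norm_pos_iff, norm_catenoid hc.le]
  positivity

theorem inner_catenoidNormal_catenoid (c u v : ℝ) :
    ⟪catenoidNormal u v, catenoid c u v⟫ = c * (1 - v * tanh v) := by
  rw [catenoidNormal, catenoid, inner_vec3, tanh_eq_sinh_div_cosh]
  field_simp
  linear_combination c * cosh v * cos_sq_add_sin_sq u

end Catenoid

theorem normal_dot_grad_schwarzschild_factor_general (m c : ℝ) (hc : 0 < c) :
    ∀ u v : ℝ,
      ⟪vec3 ((Real.cosh v)⁻¹ * Real.cos u) ((Real.cosh v)⁻¹ * Real.sin u)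
          ((Real.cosh v)⁻¹ * (-Real.sinh v)),
        gradient (fun x : EuclideanSpace ℝ (Fin 3) => 1 + m / (2 * ‖x‖))
          (vec3 (c * Real.cosh v * Real.cos u) (c * Real.cosh v * Real.sin u) (c * v))⟫
      = -(m / (2 * c ^ 2)) * (1 - v * Real.tanh v)
          / (Real.cosh v ^ 2 + v ^ 2) ^ ((3 : ℝ) / 2) := by
  intro u v
  change ⟪catenoidNormal u v, gradient (schwarzschildFactor m) (catenoid c u v)⟫ = _
  have hA : 0 < Real.cosh v ^ 2 + v ^ 2 := by positivity
  rw [(hasGradientAt_schwarzschildFactor m (catenoid_ne_zero hc u v)).gradient,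
    real_inner_smul_right, inner_catenoidNormal_catenoid, norm_catenoid hc.le,
    Real.rpow_three_halves hA.le]
  have hsqrt : 0 < √(Real.cosh v ^ 2 + v ^ 2) := Real.sqrt_pos.mpr hA
  field_simp
  rw [Real.sq_sqrt hA.le]

theorem normal_dot_grad_schwarzschild_factor (m c : ℝ) (hm : 0 < m) (hc : 0 < c) :
    ∀ u v : ℝ,
      ⟪vec3 ((Real.cosh v)⁻¹ * Real.cos u) ((Real.cosh v)⁻¹ * Real.sin u)
          ((Real.cosh v)⁻¹ * (-Real.sinh v)),
        gradient (fun x : EuclideanSpace ℝ (Fin 3) => 1 + m / (2 * ‖x‖))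
          (vec3 (c * Real.cosh v * Real.cos u) (c * Real.cosh v * Real.sin u) (c * v))⟫
      = -(m / (2 * c ^ 2)) * (1 - v * Real.tanh v)
          / (Real.cosh v ^ 2 + v ^ 2) ^ ((3 : ℝ) / 2) :=
  normal_dot_grad_schwarzschild_factor_general m c hc
end

section
/- Let Ω : ℝ² → ℝ be a C² function that is 2π-periodic in its first variable u, and suppose there exist δ > 0 and C > 0 such that |Ω(u,v)| + |∂Ω(u,v)| + |∂²Ω(u,v)| ≤ C·cosh(v)^{-δ} for all (u,v) (where |∂Ω| and |∂²Ω| denote the norms of the first and second total derivatives). Then ∫_{[0,2π]×ℝ} (1 − v·tanh(v)) · ( ∂²_{uu}Ω(u,v) + ∂²_{vv}Ω(u,v) + 2·Ω(u,v)/cosh²(v) ) du dv = 0. -/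
/-!
Write `ψ₀ v = 1 - v * tanh v`. The integrand splits as `ψ₀ ∂ᵤ²Ω + ψ₀ (∂ᵥ²Ω + 2 Ω / cosh² v)`.
Integrated in `u` over a period, the first term vanishes because `∂ᵤΩ` is `2π`-periodic.
Since `ψ₀` solves the Jacobi equation `ψ₀'' = -2 ψ₀ / cosh² v`, the second term is the
`v`-derivative of the Wronskian `ψ₀ ∂ᵥΩ - ψ₀' Ω`, which is integrable on each line (`ψ₀` and `ψ₀'`
grow linearly while `Ω` and its derivatives decay like `e^{-δ|v|}`), so it integrates to zero
over `ℝ`. The same bounds make both terms integrable on `[0, 2π] × ℝ`, so Fubini's theorem lets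
each be integrated in the convenient order.
-/

open Real MeasureTheory Set Filter

noncomputable def jacobiField (v : ℝ) : ℝ := 1 - v * tanh v

noncomputable def jacobiFieldDeriv (v : ℝ) : ℝ := -tanh v - v / cosh v ^ 2

theorem Real.hasDerivAt_tanh (x : ℝ) : HasDerivAt tanh (1 / cosh x ^ 2) x := by
  have h := (hasDerivAt_sinh x).div (hasDerivAt_cosh x) (cosh_pos x).ne'
  rw [show tanh = sinh / cosh from funext tanh_eq_sinh_div_cosh]
  refine h.congr_deriv ?_
  rw [← cosh_sq_sub_sinh_sq x]
  ring

theorem hasDerivAt_jacobiField (v : ℝ) : HasDerivAt jacobiField (jacobiFieldDeriv v) v := by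
  refine (((hasDerivAt_id' v).mul (hasDerivAt_tanh v)).const_sub 1).congr_deriv ?_
  rw [jacobiFieldDeriv]
  ring

theorem hasDerivAt_jacobiFieldDeriv (v : ℝ) :
    HasDerivAt jacobiFieldDeriv (-(2 * jacobiField v / cosh v ^ 2)) v := by
  have hc := (cosh_pos v).ne'
  refine ((hasDerivAt_tanh v).neg.sub ((hasDerivAt_id' v).div ((hasDerivAt_cosh v).pow 2)
    (pow_ne_zero 2 hc))).congr_deriv ?_
  simp only [jacobiField, tanh_eq_sinh_div_cosh, Pi.pow_apply]
  field_simp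
  ring

theorem abs_jacobiField_le (v : ℝ) : |jacobiField v| ≤ 1 + |v| := by
  calc |jacobiField v| ≤ |1| + |v| * |tanh v| := by
        rw [jacobiField, ← abs_mul]; exact abs_sub _ _
    _ ≤ 1 + |v| := by
        rw [abs_one]
        nlinarith [abs_tanh_lt_one v, abs_nonneg v]

theorem abs_jacobiFieldDeriv_le (v : ℝ) : |jacobiFieldDeriv v| ≤ 1 + |v| := by
  have hc : 1 ≤ cosh v ^ 2 := one_le_pow₀ (one_le_cosh v)
  calc |jacobiFieldDeriv v| ≤ |tanh v| + |v| / cosh v ^ 2 := by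
        rw [jacobiFieldDeriv, ← abs_neg (tanh v), ← abs_of_pos (by positivity : 0 < cosh v ^ 2),
          ← abs_div, abs_of_pos (by positivity : 0 < cosh v ^ 2)]
        exact abs_sub _ _
    _ ≤ 1 + |v| := add_le_add (abs_tanh_lt_one v).le (div_le_self (abs_nonneg v) hc)

theorem continuous_jacobiField : Continuous jacobiField :=
  continuous_iff_continuousAt.2 fun v => (hasDerivAt_jacobiField v).continuousAt

theorem continuous_jacobiFieldDeriv : Continuous jacobiFieldDeriv :=
  continuous_iff_continuousAt.2 fun v => (hasDerivAt_jacobiFieldDeriv v).continuousAt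

theorem cosh_rpow_neg_le {δ : ℝ} (hδ : 0 ≤ δ) (v : ℝ) :
    cosh v ^ (-δ) ≤ 2 ^ δ * exp (-(δ * |v|)) := by
  have hcosh : exp |v| / 2 ≤ cosh v := by
    rw [← cosh_abs, cosh_eq]
    linarith [exp_pos (-|v|)]
  calc cosh v ^ (-δ) ≤ (exp |v| / 2) ^ (-δ) :=
        rpow_le_rpow_of_nonpos (by positivity) hcosh (neg_nonpos.2 hδ)
    _ = 2 ^ δ * exp (-(δ * |v|)) := by
        rw [div_rpow (exp_pos _).le zero_le_two, ← exp_mul, rpow_neg zero_le_two, div_inv_eq_mul]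
        ring_nf

theorem one_add_le_mul_exp {b t : ℝ} (hb : 0 < b) (ht : 0 ≤ t) :
    1 + t ≤ (1 + 1 / b) * exp (b * t) := by
  have : 1 + t ≤ (1 + 1 / b) * (b * t + 1) := by
    field_simp
    nlinarith [mul_nonneg (mul_nonneg hb.le hb.le) ht]
  exact this.trans (mul_le_mul_of_nonneg_left (add_one_le_exp _) (by positivity))

theorem integrable_one_add_abs_mul_cosh_rpow_neg {δ : ℝ} (hδ : 0 < δ) :
    Integrable fun v : ℝ => (1 + |v|) * cosh v ^ (-δ) := by
  have hcont : Continuous fun v : ℝ => (1 + |v|) * cosh v ^ (-δ) :=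
    (by fun_prop : Continuous fun v : ℝ => 1 + |v|).mul
      (continuous_cosh.rpow_const fun x => Or.inl (cosh_pos x).ne')
  have hle (v : ℝ) : (1 + |v|) * cosh v ^ (-δ) ≤ (1 + 2 / δ) * 2 ^ δ * exp (-(δ / 2) * |v|) := by
    calc (1 + |v|) * cosh v ^ (-δ)
        ≤ ((1 + 1 / (δ / 2)) * exp (δ / 2 * |v|)) * (2 ^ δ * exp (-(δ * |v|))) :=
          mul_le_mul (one_add_le_mul_exp (by positivity) (abs_nonneg v))
            (cosh_rpow_neg_le hδ.le v) (by positivity) (by positivity)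
      _ = (1 + 2 / δ) * 2 ^ δ * exp (-(δ / 2) * |v|) := by
          rw [mul_mul_mul_comm, ← exp_add]
          ring_nf
  refine hcont.locallyIntegrable.integrable_of_isBigO_atTop_of_norm_isNegInvariant
    (ae_of_all _ fun v => by simp) (g := fun v => exp (-(δ / 2) * v)) ?_
    ⟨Ioi 0, Ioi_mem_atTop 0, exp_neg_integrableOn_Ioi 0 (by positivity)⟩
  refine Asymptotics.IsBigO.of_bound ((1 + 2 / δ) * 2 ^ δ) ?_
  filter_upwards [eventually_ge_atTop 0] with v hv
  rw [norm_of_nonneg (by positivity), norm_of_nonneg (exp_pos _).le]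
  simpa only [abs_of_nonneg hv] using hle v

noncomputable def partialFst (f : ℝ × ℝ → ℝ) (p : ℝ × ℝ) : ℝ := deriv (fun x => f (x, p.2)) p.1

noncomputable def partialSnd (f : ℝ × ℝ → ℝ) (p : ℝ × ℝ) : ℝ := deriv (fun y => f (p.1, y)) p.2

section PartialDerivatives

variable {f : ℝ × ℝ → ℝ} {p : ℝ × ℝ}

theorem partialFst_eq_fderiv (hf : DifferentiableAt ℝ f p) :
    partialFst f p = fderiv ℝ f p (1, 0) :=
  (hf.hasFDerivAt.comp_hasDerivAt p.1
    ((hasDerivAt_id' p.1).prodMk (hasDerivAt_const p.1 p.2))).deriv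

theorem partialSnd_eq_fderiv (hf : DifferentiableAt ℝ f p) :
    partialSnd f p = fderiv ℝ f p (0, 1) :=
  (hf.hasFDerivAt.comp_hasDerivAt p.2
    ((hasDerivAt_const p.2 p.1).prodMk (hasDerivAt_id' p.2))).deriv

theorem contDiff_partialFst {n : WithTop ℕ∞} (hf : ContDiff ℝ (n + 1) f) :
    ContDiff ℝ n (partialFst f) := by
  have hd : Differentiable ℝ f := hf.differentiable (by simp)
  rw [show partialFst f = fun p => fderiv ℝ f p (1, 0) from
    funext fun p => partialFst_eq_fderiv (hd p)]
  exact (hf.fderiv_right le_rfl).clm_apply contDiff_const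

theorem contDiff_partialSnd {n : WithTop ℕ∞} (hf : ContDiff ℝ (n + 1) f) :
    ContDiff ℝ n (partialSnd f) := by
  have hd : Differentiable ℝ f := hf.differentiable (by simp)
  rw [show partialSnd f = fun p => fderiv ℝ f p (0, 1) from
    funext fun p => partialSnd_eq_fderiv (hd p)]
  exact (hf.fderiv_right le_rfl).clm_apply contDiff_const

theorem partialFst_partialFst_eq_fderiv_fderiv (hf : ContDiff ℝ 2 f) (p : ℝ × ℝ) :
    partialFst (partialFst f) p = fderiv ℝ (fderiv ℝ f) p (1, 0) (1, 0) := by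
  have hd : Differentiable ℝ f := hf.differentiable (by simp)
  have hd2 : Differentiable ℝ (fderiv ℝ f) :=
    (hf.fderiv_right (m := 1) le_rfl).differentiable one_ne_zero
  rw [show partialFst f = fun p => fderiv ℝ f p (1, 0) from
    funext fun p => partialFst_eq_fderiv (hd p)]
  rw [partialFst_eq_fderiv ((hd2 p).clm_apply (differentiableAt_const _)),
    fderiv_clm_apply (hd2 p) (differentiableAt_const _)]
  simp

theorem partialSnd_partialSnd_eq_fderiv_fderiv (hf : ContDiff ℝ 2 f) (p : ℝ × ℝ) :
    partialSnd (partialSnd f) p = fderiv ℝ (fderiv ℝ f) p (0, 1) (0, 1) := by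
  have hd : Differentiable ℝ f := hf.differentiable (by simp)
  have hd2 : Differentiable ℝ (fderiv ℝ f) :=
    (hf.fderiv_right (m := 1) le_rfl).differentiable one_ne_zero
  rw [show partialSnd f = fun p => fderiv ℝ f p (0, 1) from
    funext fun p => partialSnd_eq_fderiv (hd p)]
  rw [partialSnd_eq_fderiv ((hd2 p).clm_apply (differentiableAt_const _)),
    fderiv_clm_apply (hd2 p) (differentiableAt_const _)]
  simp

theorem abs_partialSnd_le (hf : DifferentiableAt ℝ f p) :
    |partialSnd f p| ≤ ‖iteratedFDeriv ℝ 1 f p‖ := by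
  rw [partialSnd_eq_fderiv hf, norm_iteratedFDeriv_one, ← Real.norm_eq_abs]
  simpa using (fderiv ℝ f p).le_opNorm (0, 1)

theorem abs_fderiv_fderiv_apply_le {v w : ℝ × ℝ} (hv : ‖v‖ ≤ 1) (hw : ‖w‖ ≤ 1) :
    |fderiv ℝ (fderiv ℝ f) p v w| ≤ ‖iteratedFDeriv ℝ 2 f p‖ := by
  rw [← norm_iteratedFDeriv_fderiv, norm_iteratedFDeriv_one, ← Real.norm_eq_abs]
  calc ‖fderiv ℝ (fderiv ℝ f) p v w‖ ≤ ‖fderiv ℝ (fderiv ℝ f) p‖ * ‖v‖ * ‖w‖ :=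
        (fderiv ℝ (fderiv ℝ f) p).le_opNorm₂ v w
    _ ≤ ‖fderiv ℝ (fderiv ℝ f) p‖ * 1 * 1 := by gcongr
    _ = _ := by ring

theorem Function.Periodic.deriv {g : ℝ → ℝ} {T : ℝ} (hg : Function.Periodic g T) :
    Function.Periodic (deriv g) T := fun x => by
  rw [← deriv_comp_add_const, hg.funext]

theorem integral_Icc_partialFst_partialFst_eq_zero (hf : ContDiff ℝ 2 f) {T : ℝ} (hT : 0 ≤ T)
    (hper : ∀ x y, f (x + T, y) = f (x, y)) (y : ℝ) :
    ∫ x in Icc 0 T, partialFst (partialFst f) (x, y) = 0 := by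
  have hperiodic : Function.Periodic (fun x => partialFst f (x, y)) T :=
    Function.Periodic.deriv (g := fun x => f (x, y)) fun x => hper x y
  have hcont : Continuous (partialFst (partialFst f)) :=
    (contDiff_partialFst (n := 0) (contDiff_partialFst (n := 1) hf)).continuous
  rw [integral_Icc_eq_integral_Ioc, ← intervalIntegral.integral_of_le hT]
  change ∫ x in (0)..T, deriv (fun x => partialFst f (x, y)) x = 0
  have hd : Differentiable ℝ (partialFst f) :=
    (contDiff_partialFst (n := 1) hf).differentiable one_ne_zero
  rw [intervalIntegral.integral_deriv_eq_sub (f := fun x => partialFst f (x, y))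
      (fun x _ => (hd _).comp x (differentiableAt_id.prodMk (differentiableAt_const y)))
      ((hcont.comp (continuous_id.prodMk continuous_const)).intervalIntegrable _ _),
    sub_eq_zero]
  simpa using hperiodic 0

end PartialDerivatives

theorem integral_jacobiField_mul_eq_zero {g : ℝ → ℝ} (hg : ContDiff ℝ 2 g)
    (hint : Integrable fun v => jacobiField v * (deriv (deriv g) v + 2 * g v / cosh v ^ 2))
    (hwronskian : Integrable fun v => jacobiField v * deriv g v - jacobiFieldDeriv v * g v) :
    ∫ v, jacobiField v * (deriv (deriv g) v + 2 * g v / cosh v ^ 2) = 0 := by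
  obtain ⟨hg₁, -, hg₂⟩ := (contDiff_succ_iff_deriv (n := 1)).1 hg
  refine integral_eq_zero_of_hasDerivAt_of_integrable (fun v => ?_) hint hwronskian
  refine (((hasDerivAt_jacobiField v).mul ((hg₂.differentiable one_ne_zero) v).hasDerivAt).sub
    ((hasDerivAt_jacobiFieldDeriv v).mul (hg₁ v).hasDerivAt)).congr_deriv ?_
  ring

def DecaysLikeCoshRpow (δ : ℝ) (g : ℝ × ℝ → ℝ) : Prop :=
  Continuous g ∧ ∃ K, ∀ p : ℝ × ℝ, |g p| ≤ K * cosh p.2 ^ (-δ)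

namespace DecaysLikeCoshRpow

variable {δ : ℝ} {g h : ℝ × ℝ → ℝ}

theorem add (hg : DecaysLikeCoshRpow δ g) (hh : DecaysLikeCoshRpow δ h) :
    DecaysLikeCoshRpow δ (fun p => g p + h p) := by
  obtain ⟨hgc, K, hK⟩ := hg
  obtain ⟨hhc, L, hL⟩ := hh
  exact ⟨hgc.add hhc, K + L, fun p => (abs_add_le _ _).trans (by linarith [hK p, hL p])⟩

theorem const_mul (hg : DecaysLikeCoshRpow δ g) (c : ℝ) :
    DecaysLikeCoshRpow δ (fun p => c * g p) := by
  obtain ⟨hgc, K, hK⟩ := hg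
  refine ⟨continuous_const.mul hgc, |c| * K, fun p => ?_⟩
  rw [abs_mul, mul_assoc]
  exact mul_le_mul_of_nonneg_left (hK p) (abs_nonneg c)

theorem div_cosh_sq (hg : DecaysLikeCoshRpow δ g) :
    DecaysLikeCoshRpow δ (fun p => g p / cosh p.2 ^ 2) := by
  obtain ⟨hgc, K, hK⟩ := hg
  refine ⟨hgc.div (by fun_prop) fun p => (pow_pos (cosh_pos p.2) 2).ne', K, fun p => ?_⟩
  rw [abs_div, abs_of_pos (pow_pos (cosh_pos p.2) 2)]
  exact (div_le_self (abs_nonneg _) (one_le_pow₀ (one_le_cosh p.2))).trans (hK p)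

theorem exists_abs_mul_le (hg : DecaysLikeCoshRpow δ g) {a : ℝ → ℝ}
    (ha : ∀ v, |a v| ≤ 1 + |v|) :
    ∃ K, ∀ p : ℝ × ℝ, |a p.2 * g p| ≤ K * ((1 + |p.2|) * cosh p.2 ^ (-δ)) := by
  obtain ⟨-, K, hK⟩ := hg
  refine ⟨K, fun p => ?_⟩
  rw [abs_mul, mul_left_comm]
  exact mul_le_mul (ha p.2) (hK p) (abs_nonneg _) (by positivity)

theorem integrable_mul_slice (hg : DecaysLikeCoshRpow δ g) (hδ : 0 < δ) {a : ℝ → ℝ}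
    (ha : Continuous a) (hab : ∀ v, |a v| ≤ 1 + |v|) (u : ℝ) :
    Integrable fun v => a v * g (u, v) := by
  obtain ⟨K, hK⟩ := hg.exists_abs_mul_le hab
  refine ((integrable_one_add_abs_mul_cosh_rpow_neg hδ).const_mul K).mono'
    (ha.mul (hg.1.comp (continuous_const.prodMk continuous_id))).aestronglyMeasurable
    (ae_of_all _ fun v => hK (u, v))

theorem integrable_mul_prod (hg : DecaysLikeCoshRpow δ g) (hδ : 0 < δ) {a : ℝ → ℝ}
    (ha : Continuous a) (hab : ∀ v, |a v| ≤ 1 + |v|) (μ : Measure ℝ) [IsFiniteMeasure μ] :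
    Integrable (fun p : ℝ × ℝ => a p.2 * g p) (μ.prod volume) := by
  obtain ⟨K, hK⟩ := hg.exists_abs_mul_le hab
  refine (((integrable_one_add_abs_mul_cosh_rpow_neg hδ).const_mul K).comp_snd μ).mono'
    ((ha.comp continuous_snd).mul hg.1).aestronglyMeasurable (ae_of_all _ hK)

end DecaysLikeCoshRpow

theorem decaysLikeCoshRpow_of_norm_iteratedFDeriv_le {f : ℝ × ℝ → ℝ} {δ C : ℝ}
    (hf : ContDiff ℝ 2 f)
    (hdecay : ∀ p : ℝ × ℝ, |f p| + ‖iteratedFDeriv ℝ 1 f p‖ + ‖iteratedFDeriv ℝ 2 f p‖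
      ≤ C * cosh p.2 ^ (-δ)) :
    DecaysLikeCoshRpow δ f ∧ DecaysLikeCoshRpow δ (partialSnd f) ∧
      DecaysLikeCoshRpow δ (partialFst (partialFst f)) ∧
      DecaysLikeCoshRpow δ (partialSnd (partialSnd f)) := by
  have hf₁ := contDiff_partialFst (n := 1) hf
  have hf₂ := contDiff_partialSnd (n := 1) hf
  have h₁ (p : ℝ × ℝ) := norm_nonneg (iteratedFDeriv ℝ 1 f p)
  have h₂ (p : ℝ × ℝ) := norm_nonneg (iteratedFDeriv ℝ 2 f p)
  have hunit₁ : ‖((1 : ℝ), (0 : ℝ))‖ ≤ 1 := by simp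
  have hunit₂ : ‖((0 : ℝ), (1 : ℝ))‖ ≤ 1 := by simp
  refine ⟨⟨hf.continuous, C, fun p => ?_⟩, ⟨hf₂.continuous, C, fun p => ?_⟩,
    ⟨(contDiff_partialFst (n := 0) hf₁).continuous, C, fun p => ?_⟩,
    ⟨(contDiff_partialSnd (n := 0) hf₂).continuous, C, fun p => ?_⟩⟩
  · linarith [hdecay p, h₁ p, h₂ p]
  · linarith [hdecay p, abs_nonneg (f p), h₂ p,
      abs_partialSnd_le ((hf.differentiable two_ne_zero) p)]
  · rw [partialFst_partialFst_eq_fderiv_fderiv hf]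
    linarith [hdecay p, abs_nonneg (f p), h₁ p,
      abs_fderiv_fderiv_apply_le (f := f) (p := p) hunit₁ hunit₁]
  · rw [partialSnd_partialSnd_eq_fderiv_fderiv hf]
    linarith [hdecay p, abs_nonneg (f p), h₁ p,
      abs_fderiv_fderiv_apply_le (f := f) (p := p) hunit₂ hunit₂]

theorem integral_jacobiField_mul_slice_eq_zero {f : ℝ × ℝ → ℝ} {δ : ℝ} (hδ : 0 < δ)
    (hf : ContDiff ℝ 2 f) (h₀ : DecaysLikeCoshRpow δ f) (h₁ : DecaysLikeCoshRpow δ (partialSnd f))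
    (hL : DecaysLikeCoshRpow δ fun p => partialSnd (partialSnd f) p + 2 * f p / cosh p.2 ^ 2)
    (u : ℝ) :
    ∫ v, jacobiField v * (partialSnd (partialSnd f) (u, v) + 2 * f (u, v) / cosh v ^ 2) = 0 :=
  integral_jacobiField_mul_eq_zero (hf.comp (contDiff_const.prodMk contDiff_id))
    (hL.integrable_mul_slice hδ continuous_jacobiField abs_jacobiField_le u)
    ((h₁.integrable_mul_slice hδ continuous_jacobiField abs_jacobiField_le u).sub
      (h₀.integrable_mul_slice hδ continuous_jacobiFieldDeriv abs_jacobiFieldDeriv_le u))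

theorem jacobi_orthogonality (Ω : ℝ × ℝ → ℝ) (hC2 : ContDiff ℝ 2 Ω)
    (hper : ∀ u v : ℝ, Ω (u + 2 * Real.pi, v) = Ω (u, v))
    (hdecay : ∃ δ > (0 : ℝ), ∃ C > (0 : ℝ), ∀ u v : ℝ,
      |Ω (u, v)| + ‖iteratedFDeriv ℝ 1 Ω (u, v)‖ + ‖iteratedFDeriv ℝ 2 Ω (u, v)‖
        ≤ C * Real.cosh v ^ (-δ)) :
    ∫ p in (Set.Icc (0 : ℝ) (2 * Real.pi)) ×ˢ (Set.univ : Set ℝ),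
      (1 - p.2 * Real.tanh p.2) *
        (deriv (fun u' => deriv (fun u'' => Ω (u'', p.2)) u') p.1
          + deriv (fun v' => deriv (fun v'' => Ω (p.1, v'')) v') p.2
          + 2 * Ω p / Real.cosh p.2 ^ 2) = 0 := by
  obtain ⟨δ, hδ, C, -, hbound⟩ := hdecay
  obtain ⟨hΩ, hΩ₂, hΩ₁₁, hΩ₂₂⟩ :=
    decaysLikeCoshRpow_of_norm_iteratedFDeriv_le hC2 fun p => hbound p.1 p.2
  have hL := hΩ₂₂.add (hΩ.const_mul 2).div_cosh_sq
  set μ := volume.restrict (Icc 0 (2 * π))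
  have h₁ := hΩ₁₁.integrable_mul_prod hδ continuous_jacobiField abs_jacobiField_le μ
  have h₂ := hL.integrable_mul_prod hδ continuous_jacobiField abs_jacobiField_le μ
  have hμ : (volume : Measure (ℝ × ℝ)).restrict (Icc 0 (2 * π) ×ˢ univ) = μ.prod volume := by
    rw [Measure.volume_eq_prod, ← Measure.prod_restrict, Measure.restrict_univ]
  calc _ = ∫ p, (jacobiField p.2 * partialFst (partialFst Ω) p + jacobiField p.2 *
        (partialSnd (partialSnd Ω) p + 2 * Ω p / cosh p.2 ^ 2)) ∂μ.prod (volume : Measure ℝ) := by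
        rw [hμ]
        congr 1 with p
        simp only [jacobiField, partialFst, partialSnd]
        ring
    _ = 0 := by
        rw [integral_add h₁ h₂, integral_prod_symm _ h₁, integral_prod _ h₂]
        simp [μ, integral_const_mul,
          integral_Icc_partialFst_partialFst_eq_zero hC2 two_pi_pos.le hper,
          integral_jacobiField_mul_slice_eq_zero hδ hC2 hΩ hΩ₂ hL]
end

section
/- Let η ∈ (0,1) and let Γ₀ : ℝ → ℝ be continuous with ∫_ℝ Γ₀(w)²·cosh(w)^{2η} dw < ∞. Let Ω₀ : ℝ → ℝ be a C² function with Ω₀''(v) = Γ₀(v) for all v and Ω₀(v) → 0 as v → ±∞. Then for every η' ∈ (0, η/4) there exists a constant C > 0 such that |Ω₀(v)| ≤ C·cosh(v)^{-(η−η')} for all v ∈ ℝ. -/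
/-!
By variation of constants the decay of `Ω₀` is governed by the tails of `Γ₀`. With the weight
`ρ = cosh ^ (2η)` and `σ = 2 ^ (2η) exp (-2η w)`, so that `ρ σ ≥ 1`, the pointwise AM-GM
inequality `|Γ| ≤ (c Γ² ρ + c⁻¹ σ) / 2`, integrated over `(t, ∞)` with `c = exp (-η t)`, gives
`∫_t^∞ |Γ₀| ≲ exp (-η t)`.
Since `Ω₀ → 0` forces `Ω₀' → 0` at `+∞`, we get `Ω₀' t = -∫_t^∞ Γ₀` and then
`Ω₀ v = -∫_v^∞ Ω₀'`, so `|Ω₀ v| ≲ exp (-η v)`; reflecting `v ↦ -v` handles `-∞`, and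
`exp (-η |v|) ≤ cosh v ^ (-(η - η'))`.
-/

open Real MeasureTheory Set Filter Topology

lemma integral_exp_neg_mul_Ioi {b : ℝ} (hb : 0 < b) (c : ℝ) :
    ∫ x in Ioi c, exp (-b * x) = exp (-b * c) / b := by
  rw [integral_exp_mul_Ioi (neg_neg_of_pos hb), neg_div_neg_eq]

lemma abs_le_of_one_le_mul {a p q : ℝ} (hp : 0 < p) (hpq : 1 ≤ p * q) :
    |a| ≤ (p * a ^ 2 + q) / 2 := by
  have hsq : p ^ 2 * a ^ 2 = (p * |a|) ^ 2 := by rw [mul_pow, sq_abs]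
  have h : 0 ≤ p * (p * a ^ 2 + q - 2 * |a|) := by nlinarith [sq_nonneg (p * |a| - 1)]
  linarith [(mul_nonneg_iff_of_pos_left hp).1 h]

lemma integrable_and_integral_abs_le_of_one_le_mul {α : Type*} [MeasurableSpace α]
    {μ : Measure α} {g ρ σ : α → ℝ} {c : ℝ} (hc : 0 < c) (hρ : ∀ x, 0 < ρ x)
    (hρσ : ∀ x, 1 ≤ ρ x * σ x)
    (hg : AEStronglyMeasurable g μ) (hgρ : Integrable (fun x => g x ^ 2 * ρ x) μ)
    (hσ : Integrable σ μ) :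
    Integrable g μ ∧
      ∫ x, |g x| ∂μ ≤ (c * ∫ x, g x ^ 2 * ρ x ∂μ + c⁻¹ * ∫ x, σ x ∂μ) / 2 := by
  have hbound : ∀ x, |g x| ≤ (c * (g x ^ 2 * ρ x) + c⁻¹ * σ x) / 2 := fun x => by
    have hpq : 1 ≤ c * ρ x * (c⁻¹ * σ x) := by
      rw [show c * ρ x * (c⁻¹ * σ x) = ρ x * σ x by field_simp]
      exact hρσ x
    exact (abs_le_of_one_le_mul (mul_pos hc (hρ x)) hpq).trans_eq (by ring)
  have hmaj : Integrable (fun x => (c * (g x ^ 2 * ρ x) + c⁻¹ * σ x) / 2) μ :=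
    ((hgρ.const_mul c).add (hσ.const_mul c⁻¹)).div_const 2
  have hgi : Integrable g μ := hmaj.mono' hg (ae_of_all _ hbound)
  refine ⟨hgi, (integral_mono hgi.abs hmaj hbound).trans_eq ?_⟩
  rw [integral_div, integral_add (hgρ.const_mul c) (hσ.const_mul c⁻¹), integral_const_mul,
    integral_const_mul]

lemma one_le_cosh_rpow_mul_two_rpow_mul_exp {s : ℝ} (hs : 0 ≤ s) (w : ℝ) :
    1 ≤ cosh w ^ s * (2 ^ s * exp (-s * w)) := by
  have hrw : cosh w ^ s * (2 ^ s * exp (-s * w)) = (2 * cosh w * exp (-w)) ^ s := by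
    rw [mul_rpow (by positivity) (exp_pos _).le, mul_rpow (by norm_num) (cosh_pos w).le,
      ← exp_mul]
    ring_nf
  have hexp : exp w * exp (-w) = 1 := by rw [← exp_add, add_neg_cancel, exp_zero]
  have hcosh : exp w ≤ 2 * cosh w := by rw [cosh_eq]; linarith [exp_pos (-w)]
  rw [hrw]
  exact one_le_rpow (by nlinarith [exp_pos (-w)]) hs

lemma exists_integral_Ioi_abs_le_of_integrable_sq_mul_cosh_rpow {g : ℝ → ℝ} {η : ℝ}
    (hη : 0 < η) (hg : AEStronglyMeasurable g)
    (hint : Integrable (fun w => g w ^ 2 * cosh w ^ (2 * η))) :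
    ∃ K > 0, ∀ t, IntegrableOn g (Ioi t) ∧ ∫ w in Ioi t, |g w| ≤ K * exp (-η * t) := by
  set M := ∫ w, g w ^ 2 * cosh w ^ (2 * η)
  have hM : 0 ≤ M := integral_nonneg fun w => by positivity
  refine ⟨(M + 2 ^ (2 * η) / (2 * η)) / 2, by positivity, fun t => ?_⟩
  obtain ⟨hgi, hle⟩ :=
    integrable_and_integral_abs_le_of_one_le_mul (μ := volume.restrict (Ioi t))
    (σ := fun w => 2 ^ (2 * η) * exp (-(2 * η) * w)) (exp_pos (-η * t))
    (fun w => rpow_pos_of_pos (cosh_pos w) _)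
    (one_le_cosh_rpow_mul_two_rpow_mul_exp (by positivity)) hg.restrict hint.integrableOn
    ((exp_neg_integrableOn_Ioi t (by positivity)).const_mul _)
  refine ⟨hgi, hle.trans ?_⟩
  have hsub : ∫ w in Ioi t, g w ^ 2 * cosh w ^ (2 * η) ≤ M :=
    setIntegral_le_integral hint (ae_of_all _ fun w => by positivity)
  have hexp : (exp (-η * t))⁻¹ * exp (-(2 * η) * t) = exp (-η * t) := by
    rw [← exp_neg, ← exp_add]; ring_nf
  rw [integral_const_mul, integral_exp_neg_mul_Ioi (by positivity)]
  calc (exp (-η * t) * (∫ w in Ioi t, g w ^ 2 * cosh w ^ (2 * η))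
        + (exp (-η * t))⁻¹ * (2 ^ (2 * η) * (exp (-(2 * η) * t) / (2 * η)))) / 2
      = (exp (-η * t) * (∫ w in Ioi t, g w ^ 2 * cosh w ^ (2 * η))
        + 2 ^ (2 * η) / (2 * η) * ((exp (-η * t))⁻¹ * exp (-(2 * η) * t))) / 2 := by ring
    _ ≤ (exp (-η * t) * M
        + 2 ^ (2 * η) / (2 * η) * ((exp (-η * t))⁻¹ * exp (-(2 * η) * t))) / 2 := by gcongr
    _ = (M + 2 ^ (2 * η) / (2 * η)) / 2 * exp (-η * t) := by rw [hexp]; ring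

lemma eq_zero_of_tendsto_of_tendsto_deriv {f f' : ℝ → ℝ} {a L : ℝ}
    (hf : ∀ x, HasDerivAt f (f' x) x) (hfa : Tendsto f atTop (𝓝 a))
    (hf'L : Tendsto f' atTop (𝓝 L)) : L = 0 := by
  have hslope : ∀ x, ∃ ξ ∈ Ioo x (x + 1), f' ξ = f (x + 1) - f x := fun x => by
    obtain ⟨ξ, hξ, h⟩ := exists_hasDerivAt_eq_slope f f' (lt_add_one x)
      (fun y _ => (hf y).continuousAt.continuousWithinAt) (fun y _ => hf y)
    exact ⟨ξ, hξ, by rwa [add_sub_cancel_left, div_one] at h⟩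
  choose ξ hξ hξf using hslope
  have hξtop : Tendsto ξ atTop atTop := tendsto_atTop_mono (fun x => (hξ x).1.le) tendsto_id
  have hdiff : Tendsto (fun x => f (x + 1) - f x) atTop (𝓝 0) := by
    simpa using (hfa.comp (tendsto_atTop_add_const_right _ 1 tendsto_id)).sub hfa
  exact tendsto_nhds_unique ((hf'L.comp hξtop).congr hξf) hdiff

lemma norm_le_integral_Ioi_norm_of_hasDerivAt {E : Type*} [NormedAddCommGroup E]
    [NormedSpace ℝ E] [CompleteSpace E] {f f' : ℝ → E} {t : ℝ}
    (hderiv : ∀ x ∈ Ici t, HasDerivAt f (f' x) x) (hf' : IntegrableOn f' (Ioi t))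
    (hf : Tendsto f atTop (𝓝 0)) : ‖f t‖ ≤ ∫ x in Ioi t, ‖f' x‖ := by
  have h := integral_Ioi_of_hasDerivAt_of_tendsto' hderiv hf' hf
  rw [zero_sub] at h
  calc ‖f t‖ = ‖∫ x in Ioi t, f' x‖ := by rw [h, norm_neg]
    _ ≤ ∫ x in Ioi t, ‖f' x‖ := norm_integral_le_integral_norm f'

lemma abs_le_of_integral_Ioi_abs_second_deriv_le {f f' g : ℝ → ℝ} {K η : ℝ} (hη : 0 < η)
    (hf : ∀ x, HasDerivAt f (f' x) x) (hf' : ∀ x, HasDerivAt f' (g x) x)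
    (hg : ∀ t, IntegrableOn g (Ioi t) ∧ ∫ x in Ioi t, |g x| ≤ K * exp (-η * t))
    (hf0 : Tendsto f atTop (𝓝 0)) (v : ℝ) : |f v| ≤ K / η * exp (-η * v) := by
  have hf'lim := tendsto_limUnder_of_hasDerivAt_of_integrableOn_Ioi (fun x _ => hf' x) (hg 0).1
  rw [eq_zero_of_tendsto_of_tendsto_deriv hf hf0 hf'lim] at hf'lim
  have hf'K : ∀ t, |f' t| ≤ K * exp (-η * t) := fun t =>
    (norm_le_integral_Ioi_norm_of_hasDerivAt (fun x _ => hf' x) (hg t).1 hf'lim).trans (hg t).2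
  have hmaj : IntegrableOn (fun x => K * exp (-η * x)) (Ioi v) :=
    (exp_neg_integrableOn_Ioi v hη).const_mul K
  have hf'int : IntegrableOn f' (Ioi v) :=
    hmaj.mono' (continuous_iff_continuousAt.2 fun x => (hf' x).continuousAt).aestronglyMeasurable
      (ae_of_all _ hf'K)
  calc |f v| ≤ ∫ x in Ioi v, |f' x| :=
        norm_le_integral_Ioi_norm_of_hasDerivAt (fun x _ => hf x) hf'int hf0
    _ ≤ ∫ x in Ioi v, K * exp (-η * x) := integral_mono hf'int.abs hmaj hf'K
    _ = K / η * exp (-η * v) := by rw [integral_const_mul, integral_exp_neg_mul_Ioi hη]; ring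

lemma exists_abs_le_exp_neg_mul_of_tendsto_atTop {f f' g : ℝ → ℝ} {η : ℝ} (hη : 0 < η)
    (hf : ∀ x, HasDerivAt f (f' x) x) (hf' : ∀ x, HasDerivAt f' (g x) x)
    (hint : Integrable (fun w => g w ^ 2 * cosh w ^ (2 * η))) (hf0 : Tendsto f atTop (𝓝 0)) :
    ∃ C > 0, ∀ v, |f v| ≤ C * exp (-η * v) := by
  have hg : AEStronglyMeasurable g := by
    rw [show g = deriv f' from funext fun x => (hf' x).deriv.symm]
    exact (measurable_deriv f').aestronglyMeasurable
  obtain ⟨K, hK, hgK⟩ := exists_integral_Ioi_abs_le_of_integrable_sq_mul_cosh_rpow hη hg hint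
  exact ⟨K / η, by positivity, abs_le_of_integral_Ioi_abs_second_deriv_le hη hf hf' hgK hf0⟩

lemma exists_abs_le_exp_neg_mul_abs {f f' g : ℝ → ℝ} {η : ℝ} (hη : 0 < η)
    (hf : ∀ x, HasDerivAt f (f' x) x) (hf' : ∀ x, HasDerivAt f' (g x) x)
    (hint : Integrable (fun w => g w ^ 2 * cosh w ^ (2 * η)))
    (htop : Tendsto f atTop (𝓝 0)) (hbot : Tendsto f atBot (𝓝 0)) :
    ∃ C > 0, ∀ v, |f v| ≤ C * exp (-η * |v|) := by
  obtain ⟨C₁, hC₁, h₁⟩ := exists_abs_le_exp_neg_mul_of_tendsto_atTop hη hf hf' hint htop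
  obtain ⟨C₂, -, h₂⟩ := exists_abs_le_exp_neg_mul_of_tendsto_atTop (f := fun x => f (-x))
    (f' := fun x => -f' (-x)) (g := fun x => g (-x)) hη
    (fun x => by simpa [Function.comp_def] using (hf (-x)).comp x (hasDerivAt_neg x))
    (fun x => by simpa [Function.comp_def] using ((hf' (-x)).comp x (hasDerivAt_neg x)).fun_neg)
    (by simpa only [cosh_neg] using hint.comp_neg) (hbot.comp tendsto_neg_atTop_atBot)
  refine ⟨max C₁ C₂, lt_max_of_lt_left hC₁, fun v => ?_⟩
  rcases le_total 0 v with hv | hv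
  · rw [abs_of_nonneg hv]
    exact (h₁ v).trans (by gcongr; exact le_max_left _ _)
  · have h := h₂ (-v)
    rw [neg_neg] at h
    rw [abs_of_nonpos hv]
    exact h.trans (by gcongr; exact le_max_right _ _)

lemma exp_neg_mul_abs_le_cosh_rpow_neg {s η : ℝ} (hs : 0 ≤ s) (hsη : s ≤ η) (v : ℝ) :
    exp (-η * |v|) ≤ cosh v ^ (-s) := by
  have hcosh : cosh v ≤ exp |v| := by
    rw [cosh_eq]; linarith [exp_le_exp.2 (le_abs_self v), exp_le_exp.2 (neg_le_abs v)]
  calc exp (-η * |v|) ≤ exp (|v| * -s) := exp_le_exp.2 (by nlinarith [abs_nonneg v])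
    _ = exp |v| ^ (-s) := exp_mul _ _
    _ ≤ cosh v ^ (-s) := rpow_le_rpow_of_nonpos (cosh_pos v) hcosh (neg_nonpos.2 hs)

theorem zero_mode_decay_general (η : ℝ) (hη : η ∈ Set.Ioo (0 : ℝ) 1)
    (Γ₀ : ℝ → ℝ)
    (hint : MeasureTheory.Integrable (fun w : ℝ => Γ₀ w ^ 2 * Real.cosh w ^ (2 * η)))
    (Ω₀ : ℝ → ℝ) (hC2 : ContDiff ℝ 2 Ω₀)
    (hode : ∀ v : ℝ, deriv (deriv Ω₀) v = Γ₀ v)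
    (htop : Filter.Tendsto Ω₀ Filter.atTop (nhds 0))
    (hbot : Filter.Tendsto Ω₀ Filter.atBot (nhds 0)) :
    ∀ η' ∈ Set.Ioo (0 : ℝ) (η / 4), ∃ C > (0 : ℝ), ∀ v : ℝ,
      |Ω₀ v| ≤ C * Real.cosh v ^ (-(η - η')) := by
  rintro η' ⟨hη'0, hη'η⟩
  have hΩ : ∀ x, HasDerivAt Ω₀ (deriv Ω₀ x) x := fun x =>
    (hC2.differentiable two_ne_zero x).hasDerivAt
  have hΩ' : ∀ x, HasDerivAt (deriv Ω₀) (Γ₀ x) x := fun x =>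
    hode x ▸ (hC2.differentiable_deriv_two x).hasDerivAt
  obtain ⟨C, hC, hbound⟩ := exists_abs_le_exp_neg_mul_abs hη.1 hΩ hΩ' hint htop hbot
  refine ⟨C, hC, fun v => (hbound v).trans ?_⟩
  gcongr
  exact exp_neg_mul_abs_le_cosh_rpow_neg (by linarith) (by linarith) v

theorem zero_mode_decay (η : ℝ) (hη : η ∈ Set.Ioo (0 : ℝ) 1)
    (Γ₀ : ℝ → ℝ) (hcont : Continuous Γ₀)
    (hint : MeasureTheory.Integrable (fun w : ℝ => Γ₀ w ^ 2 * Real.cosh w ^ (2 * η)))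
    (Ω₀ : ℝ → ℝ) (hC2 : ContDiff ℝ 2 Ω₀)
    (hode : ∀ v : ℝ, deriv (deriv Ω₀) v = Γ₀ v)
    (htop : Filter.Tendsto Ω₀ Filter.atTop (nhds 0))
    (hbot : Filter.Tendsto Ω₀ Filter.atBot (nhds 0)) :
    ∀ η' ∈ Set.Ioo (0 : ℝ) (η / 4), ∃ C > (0 : ℝ), ∀ v : ℝ,
      |Ω₀ v| ≤ C * Real.cosh v ^ (-(η - η')) :=
  zero_mode_decay_general η hη Γ₀ hint Ω₀ hC2 hode htop hbot
end
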